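/- Let A be a real m×m matrix, T = e^A and T_n = Σ_{k=0}^n A^k/k! for n ∈ ℕ. For a real m×m matrix M with ‖M‖ = 1 and T_n M ≠ 0, one has ‖ TM/‖TM‖ − T_nM/‖T_nM‖ ‖ ≤ 2e^{2‖A‖}·‖A‖^{n+1}/(n+1)!. -/

import Mathlib

open Matrix

/-- Matrix exponential of a real square matrix. -/
noncomputable def mexp {m : ℕ} (M : Matrix (Fin m) (Fin m) ℝ) : Matrix (Fin m) (Fin m) ℝ :=
  NormedSpace.exp M

/-- Frobenius norm of a real square matrix. -/
noncomputable def fnorm {m : ℕ} (M : Matrix (Fin m) (Fin m) ℝ) : ℝ :=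
  Real.sqrt (∑ i, ∑ j, (M i j) ^ 2)

/-- Euclidean norm of a vector in ℝ^m. -/
noncomputable def vnorm {m : ℕ} (x : Fin m → ℝ) : ℝ :=
  Real.sqrt (∑ i, (x i) ^ 2)

/-- Frobenius inner product ⟨M, N⟩ = trace(Mᵀ N). -/
def finner {m : ℕ} (M N : Matrix (Fin m) (Fin m) ℝ) : ℝ :=
  ∑ i, ∑ j, M i j * N i j

/-- Taylor polynomial truncation T_n = ∑_{k=0}^n A^k / k!. -/
noncomputable def Tpoly {m : ℕ} (A : Matrix (Fin m) (Fin m) ℝ) (n : ℕ) :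
    Matrix (Fin m) (Fin m) ℝ :=
  ∑ k ∈ Finset.range (n + 1), ((Nat.factorial k : ℝ))⁻¹ • A ^ k

/-!
Write `u = e^A M` and `v = T_n M`. Normalization satisfies `‖u/‖u‖ - v/‖v‖‖ ≤ 2‖u - v‖/‖u‖`; the
Taylor remainder gives `‖u - v‖ ≤ e^{‖A‖} ‖A‖^{n+1}/(n+1)! ‖M‖`; and since `e^{-A} e^A = 1` and
`‖e^{-A} - 1‖ ≤ e^{‖A‖} - 1`, one has `‖M‖ ≤ e^{‖A‖} ‖u‖`. All of this holds in any real Banach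
algebra, and the Frobenius norm makes the real matrices one.
-/

open Finset NormedSpace Nat

theorem norm_inv_norm_smul_sub_inv_norm_smul_le {E : Type*} [NormedAddCommGroup E]
    [NormedSpace ℝ E] {u : E} (hu : u ≠ 0) (v : E) :
    ‖‖u‖⁻¹ • u - ‖v‖⁻¹ • v‖ ≤ 2 * ‖u - v‖ / ‖u‖ := by
  have hu' : 0 < ‖u‖ := norm_pos_iff.2 hu
  set v' := ‖v‖⁻¹ • v
  have hv' : ‖v'‖ ≤ 1 := by
    rcases eq_or_ne v 0 with rfl | hv
    · simp [v']
    · exact (norm_smul_inv_norm hv).le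
  have hvv' : ‖v‖ • v' = v := by
    rcases eq_or_ne v 0 with rfl | hv
    · simp
    · rw [smul_smul, mul_inv_cancel₀ (norm_ne_zero_iff.2 hv), one_smul]
  have hdecomp : ‖u‖⁻¹ • u - v' = ‖u‖⁻¹ • ((u - v) + (‖v‖ - ‖u‖) • v') := by
    rw [smul_add, smul_smul, mul_sub, sub_smul, ← smul_smul, hvv', inv_mul_cancel₀ hu'.ne',
      one_smul, smul_sub]
    abel
  rw [hdecomp, norm_smul, norm_inv, norm_norm, inv_mul_eq_div]
  gcongr
  calc ‖u - v + (‖v‖ - ‖u‖) • v'‖ ≤ ‖u - v‖ + |‖v‖ - ‖u‖| * ‖v'‖ := by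
        grw [norm_add_le, norm_smul, Real.norm_eq_abs]
    _ ≤ ‖u - v‖ + ‖u - v‖ * 1 := by
        gcongr
        rw [abs_sub_comm]
        exact abs_norm_sub_norm_le u v
    _ = 2 * ‖u - v‖ := by ring

namespace Real

theorem hasSum_exp_sub_sum_range (x : ℝ) (N : ℕ) :
    HasSum (fun k ↦ x ^ (k + N) / (k + N)!) (exp x - ∑ k ∈ range N, x ^ k / k !) :=
  (hasSum_nat_add_iff' N).2 (exp_eq_exp_ℝ ▸ expSeries_div_hasSum_exp x)

theorem pow_add_div_factorial_add_le {x : ℝ} (hx : 0 ≤ x) (k N : ℕ) :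
    x ^ (k + N) / (k + N)! ≤ x ^ N / N ! * (x ^ k / k !) := by
  have hfact : (k ! * N ! : ℝ) ≤ (k + N)! := by
    exact_mod_cast Nat.le_of_dvd (Nat.factorial_pos _)
      (Nat.factorial_mul_factorial_dvd_factorial_add k N)
  calc x ^ (k + N) / (k + N)! ≤ x ^ (k + N) / (k ! * N !) := by gcongr
    _ = x ^ N / N ! * (x ^ k / k !) := by rw [pow_add]; field_simp

theorem exp_sub_sum_range_succ_le {x : ℝ} (hx : 0 ≤ x) (n : ℕ) :
    exp x - ∑ k ∈ range (n + 1), x ^ k / k ! ≤ exp x * x ^ (n + 1) / (n + 1)! := by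
  have hexp := exp_eq_exp_ℝ ▸ expSeries_div_hasSum_exp x
  calc exp x - ∑ k ∈ range (n + 1), x ^ k / k ! ≤ x ^ (n + 1) / (n + 1)! * exp x :=
        hasSum_le (pow_add_div_factorial_add_le hx · (n + 1)) (hasSum_exp_sub_sum_range x (n + 1))
          (hexp.mul_left _)
    _ = exp x * x ^ (n + 1) / (n + 1)! := by ring

end Real

section BanachAlgebra

variable {𝔸 : Type*} [NormedRing 𝔸] [NormedAlgebra ℝ 𝔸] [CompleteSpace 𝔸]

theorem norm_exp_sub_sum_range_le (a : 𝔸) (n : ℕ) :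
    ‖exp a - ∑ k ∈ range (n + 1), (k ! : ℝ)⁻¹ • a ^ k‖
      ≤ Real.exp ‖a‖ - ∑ k ∈ range (n + 1), ‖a‖ ^ k / k ! := by
  refine ((hasSum_nat_add_iff' (n + 1)).2 (exp_series_hasSum_exp' (𝕂 := ℝ) a)).norm_le_of_bounded
    (Real.hasSum_exp_sub_sum_range ‖a‖ (n + 1)) fun k ↦ ?_
  rw [norm_smul, norm_inv, Real.norm_natCast, inv_mul_eq_div]
  gcongr
  exact norm_pow_le' a (by omega)

theorem norm_exp_sub_one_le (a : 𝔸) : ‖exp a - 1‖ ≤ Real.exp ‖a‖ - 1 := by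
  simpa using norm_exp_sub_sum_range_le a 0

theorem exp_neg_mul_exp (a : 𝔸) : exp (-a) * exp a = 1 := by
  let := NormedAlgebra.restrictScalars ℚ ℝ 𝔸
  rw [← exp_add_of_commute (Commute.refl a).neg_left, neg_add_cancel, exp_zero]

-- `‖exp (-a)‖ ≤ exp ‖a‖` would need `‖1‖ ≤ 1`, which fails for the Frobenius norm.
theorem norm_le_exp_norm_mul_norm_exp_mul (a x : 𝔸) : ‖x‖ ≤ Real.exp ‖a‖ * ‖exp a * x‖ := by
  set y := exp a * x
  have hx : x = y + (exp (-a) - 1) * y := by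
    rw [sub_mul, one_mul, ← mul_assoc, exp_neg_mul_exp, one_mul, add_sub_cancel]
  calc ‖x‖ = ‖y + (exp (-a) - 1) * y‖ := by rw [← hx]
    _ ≤ ‖y‖ + ‖exp (-a) - 1‖ * ‖y‖ := by grw [norm_add_le, norm_mul_le (exp (-a) - 1)]
    _ ≤ ‖y‖ + (Real.exp ‖a‖ - 1) * ‖y‖ := by
        grw [norm_exp_sub_one_le, norm_neg]
    _ = Real.exp ‖a‖ * ‖y‖ := by ring

theorem norm_normalize_exp_mul_sub_normalize_sum_mul_le {a x : 𝔸} (hx : x ≠ 0) (n : ℕ) :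
    ‖‖exp a * x‖⁻¹ • (exp a * x) -
        ‖(∑ k ∈ range (n + 1), (k ! : ℝ)⁻¹ • a ^ k) * x‖⁻¹ •
          ((∑ k ∈ range (n + 1), (k ! : ℝ)⁻¹ • a ^ k) * x)‖
      ≤ 2 * Real.exp (2 * ‖a‖) * ‖a‖ ^ (n + 1) / (n + 1)! := by
  set T := ∑ k ∈ range (n + 1), (k ! : ℝ)⁻¹ • a ^ k
  have hlow : ‖x‖ ≤ Real.exp ‖a‖ * ‖exp a * x‖ := norm_le_exp_norm_mul_norm_exp_mul a x
  have hx' : 0 < ‖x‖ := norm_pos_iff.2 hx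
  have hu : 0 < ‖exp a * x‖ := pos_of_mul_pos_right (hx'.trans_le hlow) (Real.exp_pos _).le
  have hdiff : ‖exp a * x - T * x‖ ≤ Real.exp ‖a‖ * ‖a‖ ^ (n + 1) / (n + 1)! * ‖x‖ := by
    rw [← sub_mul]
    grw [norm_mul_le, norm_exp_sub_sum_range_le,
      Real.exp_sub_sum_range_succ_le (norm_nonneg a)]
  calc _ ≤ 2 * ‖exp a * x - T * x‖ / ‖exp a * x‖ :=
        norm_inv_norm_smul_sub_inv_norm_smul_le (norm_pos_iff.1 hu) _
    _ ≤ 2 * (Real.exp ‖a‖ * ‖a‖ ^ (n + 1) / (n + 1)! * ‖x‖) / (‖x‖ / Real.exp ‖a‖) := by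
        gcongr
        rwa [div_le_iff₀' (Real.exp_pos _)]
    _ = 2 * Real.exp (2 * ‖a‖) * ‖a‖ ^ (n + 1) / (n + 1)! := by
        rw [two_mul ‖a‖, Real.exp_add]
        field_simp

end BanachAlgebra

attribute [local instance] Matrix.frobeniusNormedAddCommGroup Matrix.frobeniusNormedRing
  Matrix.frobeniusNormedAlgebra

theorem fnorm_eq_norm {m : ℕ} (X : Matrix (Fin m) (Fin m) ℝ) : fnorm X = ‖X‖ := by
  simp only [fnorm, frobenius_norm_def, Real.sqrt_eq_rpow, Real.rpow_two, Real.norm_eq_abs, sq_abs]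

theorem stmt13_general {m : ℕ} (A : Matrix (Fin m) (Fin m) ℝ) (n : ℕ)
    (M : Matrix (Fin m) (Fin m) ℝ) (hM : fnorm M = 1) :
    fnorm ((fnorm (mexp A * M))⁻¹ • (mexp A * M) -
        (fnorm (Tpoly A n * M))⁻¹ • (Tpoly A n * M))
      ≤ 2 * Real.exp (2 * fnorm A) * fnorm A ^ (n + 1) / (Nat.factorial (n + 1) : ℝ) := by
  simp only [fnorm_eq_norm] at hM ⊢
  exact norm_normalize_exp_mul_sub_normalize_sum_mul_le (by rintro rfl; simp at hM) n

/-- With T = e^A and T_n = ∑_{k=0}^n A^k/k!, for any M with ‖M‖ = 1 and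
T_n M ≠ 0 one has ‖TM/‖TM‖ − T_nM/‖T_nM‖‖ ≤ 2e^{2‖A‖}‖A‖^{n+1}/(n+1)!. -/
theorem stmt13 {m : ℕ} (A : Matrix (Fin m) (Fin m) ℝ) (n : ℕ)
    (M : Matrix (Fin m) (Fin m) ℝ) (hM : fnorm M = 1) (hTnM : Tpoly A n * M ≠ 0) :
    fnorm ((fnorm (mexp A * M))⁻¹ • (mexp A * M) -
        (fnorm (Tpoly A n * M))⁻¹ • (Tpoly A n * M))
      ≤ 2 * Real.exp (2 * fnorm A) * fnorm A ^ (n + 1) / (Nat.factorial (n + 1) : ℝ) :=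
  stmt13_general A n M hM
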